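/- Let Γ be a lattice in ℝ^m × ℝ^n such that the projection p_1 restricted to Γ is injective, and let W, W' ⊆ ℝ^n be bounded sets. If the model sets Λ(Γ, W) = p_1(Γ_W) and Λ(Γ, W') = p_1(Γ_{W'}) are bounded distance equivalent, then the lifted sets Γ_W = { γ ∈ Γ : p_2(γ) ∈ W } and Γ_{W'} = { γ ∈ Γ : p_2(γ) ∈ W' } are bounded distance equivalent (as subsets of ℝ^m × ℝ^n, with a possibly different constant). -/
import Mathlib


/-- A lattice in a real normed space: a discrete subgroup whose real span is everything. -/
def IsLattice {E : Type*} [NormedAddCommGroup E] [NormedSpace ℝ E]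
    (Γ : AddSubgroup E) : Prop :=
  DiscreteTopology Γ ∧ Submodule.span ℝ (Γ : Set E) = ⊤

/-- The cut-and-project set (model set) `Λ(Γ, W) = { p₁(γ) : γ ∈ Γ, p₂(γ) ∈ W }`. -/
def modelSet {m n : ℕ} (Γ : AddSubgroup ((Fin m → ℝ) × (Fin n → ℝ)))
    (W : Set (Fin n → ℝ)) : Set (Fin m → ℝ) :=
  {x | ∃ γ ∈ Γ, γ.2 ∈ W ∧ γ.1 = x}

/-- The lift `Γ_W = { γ ∈ Γ : p₂(γ) ∈ W }`. -/
def liftedSet {m n : ℕ} (Γ : AddSubgroup ((Fin m → ℝ) × (Fin n → ℝ)))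
    (W : Set (Fin n → ℝ)) : Set ((Fin m → ℝ) × (Fin n → ℝ)) :=
  {γ | γ ∈ Γ ∧ γ.2 ∈ W}

/-- Two point sets are bounded distance equivalent: there is a bijection
moving every point a distance at most `K` for some `K > 0`. -/
def BDEquiv {E : Type*} [MetricSpace E] (Λ Λ' : Set E) : Prop :=
  ∃ K : ℝ, 0 < K ∧ ∃ χ : Λ → Λ', Function.Bijective χ ∧ ∀ p : Λ, dist (χ p : E) (p : E) ≤ K

/-- If `Γ` is a lattice in `ℝ^m × ℝ^n` with `p₁|_Γ` injective, `W, W' ⊆ ℝ^n` are bounded,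
and the model sets `Λ(Γ, W)` and `Λ(Γ, W')` are bounded distance equivalent, then so are
the lifted sets `Γ_W` and `Γ_{W'}` (with a possibly different constant). -/
theorem bde_modelSets_implies_bde_lifts {m n : ℕ}
    (Γ : AddSubgroup ((Fin m → ℝ) × (Fin n → ℝ))) (hΓ : IsLattice Γ)
    (hinj : Set.InjOn Prod.fst (Γ : Set ((Fin m → ℝ) × (Fin n → ℝ))))
    (W W' : Set (Fin n → ℝ))
    (hWbd : Bornology.IsBounded W) (hW'bd : Bornology.IsBounded W')
    (hbde : BDEquiv (modelSet Γ W) (modelSet Γ W')) :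
    BDEquiv (liftedSet Γ W) (liftedSet Γ W') := by
  classical
  obtain ⟨K, hK, χ, hχbij, hχdist⟩ := hbde
  obtain ⟨C, hC⟩ := Metric.isBounded_iff.mp (hWbd.union hW'bd)
  have fbij : ∀ (V : Set (Fin n → ℝ)), Function.Bijective
      (fun γ : liftedSet Γ V => (⟨γ.1.1, γ.1, γ.2.1, γ.2.2, rfl⟩ : modelSet Γ V)) := by
    intro V
    constructor
    · rintro ⟨γ, hγ, hγV⟩ ⟨δ, hδ, hδV⟩ h
      have h1 : γ.1 = δ.1 := congrArg Subtype.val h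
      exact Subtype.ext (hinj hγ hδ h1)
    · rintro ⟨x, γ, hγ, hγV, hx⟩
      exact ⟨⟨γ, hγ, hγV⟩, Subtype.ext hx⟩
  let eW := Equiv.ofBijective _ (fbij W)
  let eW' := Equiv.ofBijective _ (fbij W')
  let eχ := Equiv.ofBijective χ hχbij
  refine ⟨max K (C + 1), lt_max_of_lt_left hK,
    (eW.trans (eχ.trans eW'.symm)), Equiv.bijective _, ?_⟩
  intro p
  set q := eW'.symm (eχ (eW p)) with hqdef
  have hval : ((eW.trans (eχ.trans eW'.symm)) p : (Fin m → ℝ) × (Fin n → ℝ)) = (q : _) := rfl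
  have hq1 : (q : (Fin m → ℝ) × (Fin n → ℝ)).1 = ((χ (eW p)) : Fin m → ℝ) := by
    have h := eW'.apply_symm_apply (eχ (eW p))
    have h2 := congrArg Subtype.val h
    exact h2
  rw [hval, Prod.dist_eq]
  apply max_le
  · have h3 : ((eW p) : Fin m → ℝ) = (p : (Fin m → ℝ) × (Fin n → ℝ)).1 := rfl
    calc dist (q : (Fin m → ℝ) × (Fin n → ℝ)).1 (p : (Fin m → ℝ) × (Fin n → ℝ)).1
        = dist ((χ (eW p)) : Fin m → ℝ) ((eW p) : Fin m → ℝ) := by rw [hq1, h3]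
      _ ≤ K := hχdist (eW p)
      _ ≤ max K (C + 1) := le_max_left _ _
  · have hqW' : (q : (Fin m → ℝ) × (Fin n → ℝ)).2 ∈ W' := q.2.2
    have hpW : (p : (Fin m → ℝ) × (Fin n → ℝ)).2 ∈ W := p.2.2
    calc dist (q : (Fin m → ℝ) × (Fin n → ℝ)).2 (p : (Fin m → ℝ) × (Fin n → ℝ)).2
        ≤ C := hC (Set.mem_union_right _ hqW') (Set.mem_union_left _ hpW)
      _ ≤ C + 1 := by linarith
      _ ≤ max K (C + 1) := le_max_right _ _
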